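/- arXiv:1803.01231 — 3 statements merged into one kernel-verified Lean document; each statement's English description precedes it below -/
import Mathlib

section
/- Let a_0 > 0, β > 1, and (a_t)_{t=1}^N be a finite sequence of non-negative reals. Then the sum over t from 1 to N of a_t / (a_0 + Σ_{j=1}^t a_j)^β is at most a_0^{1-β} / (β - 1). -/
open Finset

lemma adagrad_core (u q : ℝ) (hu : 1 ≤ u) (hq : 0 < q) :
    q * (1 - u⁻¹) ≤ u ^ q - 1 := by
  have hu0 : (0:ℝ) < u := by linarith
  rcases le_or_gt 1 q with h | h
  · have hb := one_add_mul_self_le_rpow_one_add (s := u - 1) (by linarith) h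
    rw [show (1:ℝ) + (u - 1) = u by ring] at hb
    have h1 : 1 - u⁻¹ ≤ u - 1 := by
      have h2 : u - 1 - (1 - u⁻¹) = (u - 1)^2 / u := by field_simp
      nlinarith [div_nonneg (sq_nonneg (u-1)) hu0.le]
    nlinarith
  · have hb := rpow_one_add_le_one_add_mul_self (s := u⁻¹ - 1)
      (by have := inv_nonneg.mpr hu0.le; linarith) hq.le h.le
    rw [show (1:ℝ) + (u⁻¹ - 1) = u⁻¹ by ring, Real.inv_rpow hu0.le] at hb
    have hv : 1 ≤ u ^ q := Real.one_le_rpow hu hq.le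
    have hv0 : 0 < u ^ q := by linarith
    have : (u ^ q)⁻¹ * (u ^ q) = 1 := inv_mul_cancel₀ (ne_of_gt hv0)
    nlinarith [inv_nonneg.mpr hv0.le]

lemma adagrad_step (β x y : ℝ) (hx : 0 < x) (hxy : x ≤ y) (hβ : 1 < β) :
    (y - x) / y ^ β ≤ (x ^ (1 - β) - y ^ (1 - β)) / (β - 1) := by
  have hy : 0 < y := lt_of_lt_of_le hx hxy
  set q := β - 1 with hqdef
  have hq : 0 < q := by simp [hqdef]; linarith
  have hu : 1 ≤ y / x := (one_le_div hx).mpr hxy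
  have hcore := adagrad_core (y / x) q hu hq
  rw [show (y / x)⁻¹ = x / y by rw [inv_div], Real.div_rpow hy.le hx.le] at hcore
  have hxq : 0 < x ^ q := Real.rpow_pos_of_pos hx q
  have hyq : 0 < y ^ q := Real.rpow_pos_of_pos hy q
  have hyb : y ^ β = y ^ q * y := by
    rw [show β = q + 1 by ring, Real.rpow_add hy, Real.rpow_one]
  have hx1 : x ^ (1 - β) = (x ^ q)⁻¹ := by
    rw [show (1:ℝ) - β = -q by ring, Real.rpow_neg hx.le]
  have hy1 : y ^ (1 - β) = (y ^ q)⁻¹ := by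
    rw [show (1:ℝ) - β = -q by ring, Real.rpow_neg hy.le]
  rw [hyb, hx1, hy1, div_le_div_iff₀ (by positivity) hq]
  have h2 : q * (y - x) ≤ (y ^ q / x ^ q - 1) * y := by
    have h3 := mul_le_mul_of_nonneg_right hcore hy.le
    calc q * (y - x) = q * (1 - x / y) * y := by field_simp
      _ ≤ _ := h3
  calc (y - x) * q = q * (y - x) := by ring
    _ ≤ (y ^ q / x ^ q - 1) * y := h2
    _ = ((x ^ q)⁻¹ - (y ^ q)⁻¹) * (y ^ q * y) := by field_simp

/-- AdaGrad-type summation bound (Lemma 4 of Li & Orabona): for `a₀ > 0`, `β > 1` and a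
non-negative finite sequence `(a_t)_{t=1}^N`,
`∑_{t=1}^N a_t / (a₀ + ∑_{j=1}^t a_j)^β ≤ a₀^{1-β} / (β - 1)`. -/
theorem adagrad_sum_bound (a₀ β : ℝ) (ha₀ : 0 < a₀) (hβ : 1 < β) (N : ℕ)
    (a : ℕ → ℝ) (ha : ∀ t, 0 ≤ a t) :
    ∑ t ∈ Finset.Icc 1 N, a t / (a₀ + ∑ j ∈ Finset.Icc 1 t, a j) ^ β
      ≤ a₀ ^ (1 - β) / (β - 1) := by
  set S : ℕ → ℝ := fun t => a₀ + ∑ j ∈ Finset.Icc 1 t, a j with hS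
  have hSpos : ∀ t, 0 < S t := fun t =>
    add_pos_of_pos_of_nonneg ha₀ (Finset.sum_nonneg fun _ _ => ha _)
  have hS0 : S 0 = a₀ := by simp [hS]
  have hsucc : ∀ t : ℕ, S (t + 1) = S t + a (t + 1) := by
    intro t
    simp only [hS]
    rw [Finset.sum_Icc_succ_top (Nat.le_add_left 1 t)]
    ring
  have hstep : ∀ t : ℕ, a (t+1) / S (t+1) ^ β ≤ (S t ^ (1-β) - S (t+1) ^ (1-β)) / (β-1) := by
    intro t
    have h := adagrad_step β (S t) (S (t+1)) (hSpos t) (by rw [hsucc]; linarith [ha (t+1)]) hβ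
    rwa [hsucc, add_sub_cancel_left, ← hsucc] at h
  calc ∑ t ∈ Finset.Icc 1 N, a t / S t ^ β
      = ∑ i ∈ Finset.range N, a (i+1) / S (i+1) ^ β := by
        rw [← Finset.Ico_add_one_right_eq_Icc, Finset.sum_Ico_eq_sum_range]
        simp [Nat.add_comm]
    _ ≤ ∑ i ∈ Finset.range N, (S i ^ (1-β) - S (i+1) ^ (1-β)) / (β-1) :=
        Finset.sum_le_sum fun i _ => hstep i
    _ = (S 0 ^ (1-β) - S N ^ (1-β)) / (β-1) := by
        rw [← Finset.sum_div, Finset.sum_range_sub']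
    _ ≤ a₀ ^ (1-β) / (β-1) := by
        rw [hS0]
        have : 0 ≤ S N ^ (1-β) := (Real.rpow_pos_of_pos (hSpos N) _).le
        gcongr <;> linarith
end

section
/- Let (a_t) and (b_t) be non-negative real sequences such that (b_t) is bounded, the series Σ a_t b_t converges, the series Σ a_t diverges, and there exists C > 0 with |b_{t+1} - b_t| ≤ C a_t for all t. Then b_t → 0 as t → ∞. -/
open Filter

/-- Lemma A.5 of Mairal (2013): if `(a_t)`, `(b_t)` are non-negative real sequences with `(b_t)`
bounded, `∑ a_t b_t` convergent, `∑ a_t` divergent, and `|b_{t+1} - b_t| ≤ C a_t` for some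
`C > 0`, then `b_t → 0`. -/
theorem tendsto_zero_of_summable_mul (a b : ℕ → ℝ)
    (ha : ∀ t, 0 ≤ a t) (hb : ∀ t, 0 ≤ b t)
    (hbdd : ∃ B : ℝ, ∀ t, b t ≤ B)
    (hconv : Summable fun t => a t * b t)
    (hdiv : ¬ Summable a)
    (C : ℝ) (hC : 0 < C) (hlip : ∀ t, |b (t + 1) - b t| ≤ C * a t) :
    Tendsto b atTop (nhds 0) := by
  classical
  by_contra hnot
  rw [Metric.tendsto_atTop] at hnot
  push_neg at hnot
  obtain ⟨ε, hε, hfreq⟩ := hnot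
  have hfreq' : ∀ N, ∃ n ≥ N, ε ≤ b n := by
    intro N
    obtain ⟨n, hn, h⟩ := hfreq N
    exact ⟨n, hn, by rwa [Real.dist_eq, sub_zero, abs_of_nonneg (hb n)] at h⟩
  -- b is frequently below ε/2
  have hsmall : ∀ N, ∃ n ≥ N, b n < ε / 2 := by
    by_contra h
    push_neg at h
    obtain ⟨N, hN⟩ := h
    apply hdiv
    rw [← summable_nat_add_iff N]
    have hsum : Summable (fun t => (2 / ε) * (a (t + N) * b (t + N))) :=
      (((summable_nat_add_iff N).mpr hconv)).mul_left (2 / ε)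
    refine Summable.of_nonneg_of_le (fun t => ha _) (fun t => ?_) hsum
    have hbt : ε / 2 ≤ b (t + N) := hN _ (Nat.le_add_left _ _)
    have h1 : a (t + N) * (ε / 2) ≤ a (t + N) * b (t + N) :=
      mul_le_mul_of_nonneg_left hbt (ha _)
    have h2 : (2 / ε) * (a (t + N) * (ε / 2)) ≤ (2 / ε) * (a (t + N) * b (t + N)) := by
      apply mul_le_mul_of_nonneg_left h1
      positivity
    calc a (t + N) = (2 / ε) * (a (t + N) * (ε / 2)) := by field_simp
      _ ≤ (2 / ε) * (a (t + N) * b (t + N)) := h2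
  set f : ℕ → ℝ := fun t => a t * b t with hf
  have hS : CauchySeq (fun n => ∑ i ∈ Finset.range n, f i) :=
    hconv.hasSum.tendsto_sum_nat.cauchySeq
  obtain ⟨N, hN⟩ := Metric.cauchySeq_iff.mp hS (ε ^ 2 / (4 * C)) (by positivity)
  obtain ⟨m, hmN, hbm⟩ := hfreq' N
  obtain ⟨n, hnm, hbn⟩ := hsmall (m + 1)
  have hex : ∃ t, m ≤ t ∧ b t < ε / 2 := ⟨n, by omega, hbn⟩
  set j := Nat.find hex with hjdef
  have hj := Nat.find_spec hex
  have hmin : ∀ t, m ≤ t → t < j → ε / 2 ≤ b t := by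
    intro t hmt htj
    by_contra h
    push_neg at h
    have hle : Nat.find hex ≤ t := Nat.find_le ⟨hmt, h⟩
    omega
  have hmj : m < j := by
    rcases lt_or_eq_of_le hj.1 with h | h
    · exact h
    · exfalso; rw [← h] at hj; linarith [hj.2]
  -- telescoping
  have htel : b j - b m = ∑ t ∈ Finset.Ico m j, (b (t + 1) - b t) := by
    rw [Finset.sum_Ico_eq_sub _ hmj.le, Finset.sum_range_sub (fun i => b i),
      Finset.sum_range_sub (fun i => b i)]
    ring
  have habs : ε / 2 ≤ ∑ t ∈ Finset.Ico m j, |b (t + 1) - b t| := by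
    have h1 : ε / 2 ≤ b m - b j := by linarith [hj.2, hbm]
    have h2 : b m - b j ≤ |b j - b m| := by rw [abs_sub_comm]; exact le_abs_self _
    have h3 : |b j - b m| ≤ ∑ t ∈ Finset.Ico m j, |b (t + 1) - b t| := by
      rw [htel]; exact Finset.abs_sum_le_sum_abs _ _
    linarith
  have hsuma : ε / (2 * C) ≤ ∑ t ∈ Finset.Ico m j, a t := by
    have h1 : ∑ t ∈ Finset.Ico m j, |b (t + 1) - b t| ≤ ∑ t ∈ Finset.Ico m j, C * a t :=
      Finset.sum_le_sum (fun t _ => hlip t)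
    rw [← Finset.mul_sum] at h1
    rw [div_le_iff₀ (by positivity)]
    calc ε = 2 * (ε / 2) := by ring
      _ ≤ 2 * (C * ∑ t ∈ Finset.Ico m j, a t) := by linarith
      _ = (∑ t ∈ Finset.Ico m j, a t) * (2 * C) := by ring
  have hsumf : ε ^ 2 / (4 * C) ≤ ∑ t ∈ Finset.Ico m j, f t := by
    have h1 : ∑ t ∈ Finset.Ico m j, (ε / 2) * a t ≤ ∑ t ∈ Finset.Ico m j, f t := by
      apply Finset.sum_le_sum
      intro t ht
      rw [Finset.mem_Ico] at ht
      have := hmin t ht.1 ht.2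
      have := ha t
      calc (ε / 2) * a t = a t * (ε / 2) := by ring
        _ ≤ a t * b t := mul_le_mul_of_nonneg_left ‹ε / 2 ≤ b t› (ha t)
    rw [← Finset.mul_sum] at h1
    have h2 : ε ^ 2 / (4 * C) ≤ (ε / 2) * (ε / (2 * C)) := by
      exact le_of_eq (by ring)
    have h3 : (ε / 2) * (ε / (2 * C)) ≤ (ε / 2) * ∑ t ∈ Finset.Ico m j, a t :=
      mul_le_mul_of_nonneg_left hsuma (by positivity)
    linarith
  have hcau := hN j (by omega) m hmN
  rw [Real.dist_eq] at hcau
  have hdiff : (∑ i ∈ Finset.range j, f i) - ∑ i ∈ Finset.range m, f i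
      = ∑ t ∈ Finset.Ico m j, f t := (Finset.sum_Ico_eq_sub _ hmj.le).symm
  have : ∑ t ∈ Finset.Ico m j, f t < ε ^ 2 / (4 * C) := by
    calc ∑ t ∈ Finset.Ico m j, f t
        ≤ |(∑ i ∈ Finset.range j, f i) - ∑ i ∈ Finset.range m, f i| := by
          rw [hdiff]; exact le_abs_self _
      _ < ε ^ 2 / (4 * C) := hcau
  linarith
end

section
/- Suppose Θ ⊂ ℝ^q is compact, Ω ⊂ ℝ^p is compact with measure 1, y^s : Ω × Θ → ℝ is twice continuously differentiable in θ with all first and second partial derivatives in θ uniformly bounded on Ω × Θ, and η ↦ θ*_η := argmin_{θ∈Θ} ‖η(·) - y^s(·,θ)‖²_{L2(Ω)} is well defined, unique, interior, and satisfies a Lipschitz bound ‖θ*_η - θ*_{η₀}‖ ≤ L ‖η - η₀‖_{L2(Ω)} near η₀. Then the map η ↦ V_η, where V_η = ∫_Ω ∂²/∂θ∂θᵀ [η(x) - y^s(x,θ)]² dx evaluated at θ = θ*_η, is Lipschitz in the Frobenius norm: there exists C > 0 such that ‖V_η - V_{η₀}‖_F ≤ C ‖η - η₀‖_{L2(Ω)}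 for all η in an L2-neighborhood of η₀. -/
/-!
Entrywise, `V_η(θ)` integrates `2 (∂_j yˢ ∂_k yˢ - (η - yˢ) ∂²_{jk} yˢ)`. Since the θ-derivatives of
`yˢ` up to order two are bounded and Lipschitz, the integrands at `(η, θ*_η)` and `(η₀, θ*_{η₀})`
differ pointwise by `O(‖θ*_η - θ*_{η₀}‖ (1 + |η₀|) + |η - η₀|)`. On a domain of measure one,
`∫ |η - η₀| ≤ ‖η - η₀‖_{L²}`, and the Lipschitz bound on `θ*` then makes every entry, hence the
Frobenius norm, of `V_η - V_{η₀}` at most a constant times `‖η - η₀‖_{L²}`.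
-/

open MeasureTheory

/-- The Euclidean norm on `ℝ^q`. -/
noncomputable def euclNorm {q : ℕ} (v : Fin q → ℝ) : ℝ :=
  Real.sqrt (∑ i, v i ^ 2)

/-- The Frobenius norm of a real square matrix. -/
noncomputable def frobNorm {q : ℕ} (M : Matrix (Fin q) (Fin q) ℝ) : ℝ :=
  Real.sqrt (∑ i, ∑ j, (M i j) ^ 2)

/-- The `L²(Ω)` distance between two functions. -/
noncomputable def L2dist {p : ℕ} (Ω : Set (Fin p → ℝ)) (η η₀ : (Fin p → ℝ) → ℝ) : ℝ :=
  Real.sqrt (∫ x in Ω, (η x - η₀ x) ^ 2)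

/-- The Hessian matrix `V_η = ∫_Ω ∂²/∂θ∂θᵀ [η(x) - yˢ(x,θ)]² dx` evaluated at a given `θ`;
entrywise `[V]_{jk} = 2∫_Ω [(∂_j yˢ)(∂_k yˢ) - (η - yˢ) ∂²_{jk} yˢ] dx`. -/
noncomputable def hessV {p q : ℕ} (Ω : Set (Fin p → ℝ))
    (ys : (Fin p → ℝ) → (Fin q → ℝ) → ℝ)
    (dys : (Fin p → ℝ) → (Fin q → ℝ) → Fin q → ℝ)
    (d2ys : (Fin p → ℝ) → (Fin q → ℝ) → Fin q → Fin q → ℝ)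
    (η : (Fin p → ℝ) → ℝ) (θ : Fin q → ℝ) : Matrix (Fin q) (Fin q) ℝ :=
  fun j k => ∫ x in Ω, 2 * (dys x θ j * dys x θ k - (η x - ys x θ) * d2ys x θ j k)

lemma abs_apply_le_euclNorm {q : ℕ} (v : Fin q → ℝ) (i : Fin q) : |v i| ≤ euclNorm v := by
  rw [euclNorm, ← Real.sqrt_sq_eq_abs]
  exact Real.sqrt_le_sqrt (Finset.single_le_sum (fun j _ => sq_nonneg (v j)) (Finset.mem_univ i))

lemma euclNorm_nonneg {q : ℕ} (v : Fin q → ℝ) : 0 ≤ euclNorm v := Real.sqrt_nonneg _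

lemma frobNorm_le_of_forall_abs_le {q : ℕ} {M : Matrix (Fin q) (Fin q) ℝ} {B : ℝ} (hB : 0 ≤ B)
    (h : ∀ j k, |M j k| ≤ B) : frobNorm M ≤ q * B := by
  have hsum : ∑ i, ∑ j, M i j ^ 2 ≤ ∑ _i : Fin q, ∑ _j : Fin q, B ^ 2 :=
    Finset.sum_le_sum fun i _ => Finset.sum_le_sum fun j _ => sq_le_sq' (abs_le.1 (h i j)).1
      (abs_le.1 (h i j)).2
  calc frobNorm M ≤ Real.sqrt (((q : ℝ) * B) ^ 2) := by
        refine Real.sqrt_le_sqrt (hsum.trans_eq ?_)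
        simp only [Finset.sum_const, Finset.card_univ, Fintype.card_fin, nsmul_eq_mul]
        ring
    _ = q * B := Real.sqrt_sq (by positivity)

-- This is `Var |f| ≥ 0`.
lemma integral_abs_le_sqrt_integral_sq {α : Type*} [MeasurableSpace α] {μ : Measure α}
    [IsProbabilityMeasure μ] {f : α → ℝ} (hf : MemLp f 2 μ) :
    ∫ x, |f x| ∂μ ≤ Real.sqrt (∫ x, f x ^ 2 ∂μ) := by
  have hvar := ProbabilityTheory.variance_nonneg |f| μ
  rw [ProbabilityTheory.variance_eq_sub hf.abs] at hvar
  simp only [Pi.pow_apply, Pi.abs_apply, sq_abs] at hvar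
  exact Real.le_sqrt_of_sq_le (by linarith)

lemma abs_mul_sub_mul_le (a b a₀ b₀ : ℝ) :
    |a * b - a₀ * b₀| ≤ |a| * |b - b₀| + |a - a₀| * |b₀| := by
  rw [show a * b - a₀ * b₀ = a * (b - b₀) + (a - a₀) * b₀ by ring, ← abs_mul, ← abs_mul]
  exact abs_add_le _ _

lemma abs_hessIntegrand_sub_le {C t u v u₀ v₀ e e₀ y y₀ h h₀ : ℝ} (hC : 0 ≤ C) (ht : 0 ≤ t)
    (hu : |u| ≤ C) (hv₀ : |v₀| ≤ C) (hy₀ : |y₀| ≤ C) (hh : |h| ≤ C)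
    (hu_sub : |u - u₀| ≤ C * t) (hv_sub : |v - v₀| ≤ C * t) (hy_sub : |y - y₀| ≤ C * t)
    (hh_sub : |h - h₀| ≤ C * t) :
    |2 * (u * v - (e - y) * h) - 2 * (u₀ * v₀ - (e₀ - y₀) * h₀)|
      ≤ 8 * C ^ 2 * t + 2 * C * |e - e₀| + 2 * C * t * |e₀| := by
  have hfirst : |u * v - u₀ * v₀| ≤ 2 * C ^ 2 * t := by
    calc |u * v - u₀ * v₀| ≤ |u| * |v - v₀| + |u - u₀| * |v₀| := abs_mul_sub_mul_le ..
      _ ≤ C * (C * t) + C * t * C := by gcongr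
      _ = 2 * C ^ 2 * t := by ring
  have hsecond : |h * (e - y) - h₀ * (e₀ - y₀)|
      ≤ C * (|e - e₀| + C * t) + C * t * (|e₀| + C) := by
    calc |h * (e - y) - h₀ * (e₀ - y₀)|
        ≤ |h| * |(e - y) - (e₀ - y₀)| + |h - h₀| * |e₀ - y₀| := abs_mul_sub_mul_le ..
      _ ≤ C * (|e - e₀| + C * t) + C * t * (|e₀| + C) := by
        gcongr
        · rw [show e - y - (e₀ - y₀) = (e - e₀) - (y - y₀) by ring]
          exact (abs_sub _ _).trans (by linarith)
        · exact (abs_sub _ _).trans (by linarith)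
  have hsplit : 2 * (u * v - (e - y) * h) - 2 * (u₀ * v₀ - (e₀ - y₀) * h₀)
      = 2 * ((u * v - u₀ * v₀) - (h * (e - y) - h₀ * (e₀ - y₀))) := by ring
  rw [hsplit, abs_mul, abs_two]
  linarith [abs_sub (u * v - u₀ * v₀) (h * (e - y) - h₀ * (e₀ - y₀))]

lemma abs_integral_sub_le_of_abs_sub_le {α : Type*} [MeasurableSpace α] {μ : Measure α}
    [IsProbabilityMeasure μ] {F G g₁ g₂ : α → ℝ} {a b c : ℝ} (hF : Integrable F μ)
    (hG : Integrable G μ) (hg₁ : Integrable g₁ μ) (hg₂ : Integrable g₂ μ)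
    (h : ∀ᵐ x ∂μ, |F x - G x| ≤ a + b * |g₁ x| + c * |g₂ x|) :
    |∫ x, F x ∂μ - ∫ x, G x ∂μ| ≤ a + b * ∫ x, |g₁ x| ∂μ + c * ∫ x, |g₂ x| ∂μ := by
  have hb : Integrable (fun x => b * |g₁ x|) μ := hg₁.abs.const_mul b
  have hc : Integrable (fun x => c * |g₂ x|) μ := hg₂.abs.const_mul c
  have hab : Integrable (fun x => a + b * |g₁ x|) μ := (integrable_const a).add hb
  rw [← integral_sub hF hG, ← Real.norm_eq_abs]
  refine (norm_integral_le_of_norm_le (f := fun x => F x - G x)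
    (g := fun x => a + b * |g₁ x| + c * |g₂ x|) (hab.add hc) h).trans_eq ?_
  rw [integral_add hab hc, integral_add (integrable_const a) hb, integral_const_mul,
    integral_const_mul, integral_const, probReal_univ, one_smul]

section Hessian

variable {p q : ℕ} {Ω : Set (Fin p → ℝ)} {Θ : Set (Fin q → ℝ)}
  {ys : (Fin p → ℝ) → (Fin q → ℝ) → ℝ} {dys : (Fin p → ℝ) → (Fin q → ℝ) → Fin q → ℝ}
  {d2ys : (Fin p → ℝ) → (Fin q → ℝ) → Fin q → Fin q → ℝ}

variable (ys dys d2ys) in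
def hessIntegrand (η : (Fin p → ℝ) → ℝ) (θ : Fin q → ℝ) (j k : Fin q) (x : Fin p → ℝ) : ℝ :=
  2 * (dys x θ j * dys x θ k - (η x - ys x θ) * d2ys x θ j k)

lemma hessV_apply (η : (Fin p → ℝ) → ℝ) (θ : Fin q → ℝ) (j k : Fin q) :
    hessV Ω ys dys d2ys η θ j k = ∫ x in Ω, hessIntegrand ys dys d2ys η θ j k x :=
  rfl

lemma integrable_hessIntegrand [IsFiniteMeasure (volume.restrict Ω)] (hΩm : MeasurableSet Ω)
    {η : (Fin p → ℝ) → ℝ} {θ : Fin q → ℝ} {j k : Fin q} {C : ℝ}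
    (hη : Integrable η (volume.restrict Ω))
    (hys_meas : AEStronglyMeasurable (fun x => ys x θ) (volume.restrict Ω))
    (hdys_meas : AEStronglyMeasurable (fun x => dys x θ) (volume.restrict Ω))
    (hd2ys_meas : AEStronglyMeasurable (fun x => d2ys x θ j k) (volume.restrict Ω))
    (hys_bdd : ∀ x ∈ Ω, |ys x θ| ≤ C) (hdys_bdd : ∀ x ∈ Ω, euclNorm (dys x θ) ≤ C)
    (hd2ys_bdd : ∀ x ∈ Ω, |d2ys x θ j k| ≤ C) :
    Integrable (hessIntegrand ys dys d2ys η θ j k) (volume.restrict Ω) := by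
  have hdys_apply (i : Fin q) : AEStronglyMeasurable (fun x => dys x θ i) (volume.restrict Ω) :=
    (continuous_apply i).comp_aestronglyMeasurable hdys_meas
  have hprod : Integrable (fun x => dys x θ j * dys x θ k) (volume.restrict Ω) := by
    refine .of_bound ((hdys_apply j).mul (hdys_apply k)) (C * C) ?_
    filter_upwards [ae_restrict_mem hΩm] with x hx
    rw [Real.norm_eq_abs, abs_mul]
    exact mul_le_mul ((abs_apply_le_euclNorm _ j).trans (hdys_bdd x hx))
      ((abs_apply_le_euclNorm _ k).trans (hdys_bdd x hx)) (abs_nonneg _)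
      ((abs_nonneg _).trans ((abs_apply_le_euclNorm _ j).trans (hdys_bdd x hx)))
  have hys : Integrable (fun x => ys x θ) (volume.restrict Ω) :=
    .of_bound hys_meas C (by filter_upwards [ae_restrict_mem hΩm] with x hx using hys_bdd x hx)
  have hresid : Integrable (fun x => (η x - ys x θ) * d2ys x θ j k) (volume.restrict Ω) :=
    (hη.sub hys).mul_bdd hd2ys_meas
      (by filter_upwards [ae_restrict_mem hΩm] with x hx using hd2ys_bdd x hx)
  exact (hprod.sub hresid).const_mul 2

lemma abs_hessIntegrand_sub_hessIntegrand_le {C : ℝ} (hC : 0 ≤ C)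
    (hys_bdd : ∀ x ∈ Ω, ∀ θ ∈ Θ, |ys x θ| ≤ C)
    (hdys_bdd : ∀ x ∈ Ω, ∀ θ ∈ Θ, euclNorm (dys x θ) ≤ C)
    (hd2ys_bdd : ∀ x ∈ Ω, ∀ θ ∈ Θ, ∀ j k, |d2ys x θ j k| ≤ C)
    (hys_lip : ∀ x ∈ Ω, ∀ θ ∈ Θ, ∀ θ' ∈ Θ, |ys x θ - ys x θ'| ≤ C * euclNorm (θ - θ'))
    (hdys_lip : ∀ x ∈ Ω, ∀ θ ∈ Θ, ∀ θ' ∈ Θ,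
      euclNorm (dys x θ - dys x θ') ≤ C * euclNorm (θ - θ'))
    (hd2ys_lip : ∀ x ∈ Ω, ∀ θ ∈ Θ, ∀ θ' ∈ Θ, ∀ j k,
      |d2ys x θ j k - d2ys x θ' j k| ≤ C * euclNorm (θ - θ'))
    {x : Fin p → ℝ} (hx : x ∈ Ω) {θ θ₀ : Fin q → ℝ} (hθ : θ ∈ Θ) (hθ₀ : θ₀ ∈ Θ)
    (η η₀ : (Fin p → ℝ) → ℝ) (j k : Fin q) :
    |hessIntegrand ys dys d2ys η θ j k x - hessIntegrand ys dys d2ys η₀ θ₀ j k x|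
      ≤ 8 * C ^ 2 * euclNorm (θ - θ₀) + 2 * C * |η x - η₀ x|
        + 2 * C * euclNorm (θ - θ₀) * |η₀ x| :=
  abs_hessIntegrand_sub_le hC (euclNorm_nonneg _)
    ((abs_apply_le_euclNorm _ j).trans (hdys_bdd x hx θ hθ))
    ((abs_apply_le_euclNorm _ k).trans (hdys_bdd x hx θ₀ hθ₀))
    (hys_bdd x hx θ₀ hθ₀) (hd2ys_bdd x hx θ hθ j k)
    ((abs_apply_le_euclNorm (dys x θ - dys x θ₀) j).trans (hdys_lip x hx θ hθ θ₀ hθ₀))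
    ((abs_apply_le_euclNorm (dys x θ - dys x θ₀) k).trans (hdys_lip x hx θ hθ θ₀ hθ₀))
    (hys_lip x hx θ hθ θ₀ hθ₀) (hd2ys_lip x hx θ hθ θ₀ hθ₀ j k)

end Hessian

theorem hessV_lipschitz_general {p q : ℕ} (Ω : Set (Fin p → ℝ))
    (hΩm : MeasurableSet Ω) (hvol : volume Ω = 1)
    (Θ : Set (Fin q → ℝ))
    (ys : (Fin p → ℝ) → (Fin q → ℝ) → ℝ)
    (dys : (Fin p → ℝ) → (Fin q → ℝ) → Fin q → ℝ)
    (d2ys : (Fin p → ℝ) → (Fin q → ℝ) → Fin q → Fin q → ℝ)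
    -- measurability of the slices
    (hys_meas : ∀ θ ∈ Θ, AEStronglyMeasurable (fun x => ys x θ) (volume.restrict Ω))
    (hdys_meas : ∀ θ ∈ Θ, AEStronglyMeasurable (fun x => dys x θ) (volume.restrict Ω))
    (hd2ys_meas : ∀ θ ∈ Θ, ∀ j k, AEStronglyMeasurable (fun x => d2ys x θ j k)
      (volume.restrict Ω))
    -- uniform boundedness and Lipschitz continuity (in θ) of yˢ and its first and second
    -- partial derivatives in θ, on Ω × Θ
    (C₁ : ℝ)
    (hys_bdd : ∀ x ∈ Ω, ∀ θ ∈ Θ, |ys x θ| ≤ C₁)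
    (hdys_bdd : ∀ x ∈ Ω, ∀ θ ∈ Θ, euclNorm (dys x θ) ≤ C₁)
    (hd2ys_bdd : ∀ x ∈ Ω, ∀ θ ∈ Θ, ∀ j k, |d2ys x θ j k| ≤ C₁)
    (hys_lip : ∀ x ∈ Ω, ∀ θ ∈ Θ, ∀ θ' ∈ Θ, |ys x θ - ys x θ'| ≤ C₁ * euclNorm (θ - θ'))
    (hdys_lip : ∀ x ∈ Ω, ∀ θ ∈ Θ, ∀ θ' ∈ Θ,
      euclNorm (dys x θ - dys x θ') ≤ C₁ * euclNorm (θ - θ'))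
    (hd2ys_lip : ∀ x ∈ Ω, ∀ θ ∈ Θ, ∀ θ' ∈ Θ, ∀ j k,
      |d2ys x θ j k - d2ys x θ' j k| ≤ C₁ * euclNorm (θ - θ'))
    -- the projected calibration parameter: well defined, valued in Θ, and Lipschitz near η₀
    (thetaStar : ((Fin p → ℝ) → ℝ) → (Fin q → ℝ))
    (hθΘ : ∀ η, thetaStar η ∈ Θ)
    (η₀ : (Fin p → ℝ) → ℝ) (hη₀ : MemLp η₀ 2 (volume.restrict Ω))
    (L ε₀ : ℝ) (hε₀ : 0 < ε₀)
    (hLip : ∀ η, MemLp η 2 (volume.restrict Ω) → L2dist Ω η η₀ ≤ ε₀ →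
      euclNorm (thetaStar η - thetaStar η₀) ≤ L * L2dist Ω η η₀) :
    ∃ C > 0, ∃ δ > 0, ∀ η, MemLp η 2 (volume.restrict Ω) → L2dist Ω η η₀ ≤ δ →
      frobNorm (hessV Ω ys dys d2ys η (thetaStar η) - hessV Ω ys dys d2ys η₀ (thetaStar η₀))
        ≤ C * L2dist Ω η η₀ := by
  have : IsProbabilityMeasure (volume.restrict Ω) := ⟨by simpa using hvol⟩
  obtain ⟨x₀, hx₀⟩ : Ω.Nonempty := nonempty_of_measure_ne_zero (μ := volume) (by simp [hvol])
  have hC₁ : 0 ≤ C₁ := (abs_nonneg _).trans (hys_bdd x₀ hx₀ _ (hθΘ η₀))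
  have hInt (η) (hη : MemLp η 2 (volume.restrict Ω)) (j k : Fin q) :
      Integrable (hessIntegrand ys dys d2ys η (thetaStar η) j k) (volume.restrict Ω) :=
    integrable_hessIntegrand hΩm (hη.integrable one_le_two) (hys_meas _ (hθΘ η))
      (hdys_meas _ (hθΘ η)) (hd2ys_meas _ (hθΘ η) j k) (fun x hx => hys_bdd x hx _ (hθΘ η))
      (fun x hx => hdys_bdd x hx _ (hθΘ η)) (fun x hx => hd2ys_bdd x hx _ (hθΘ η) j k)
  set M := ∫ x in Ω, |η₀ x|
  set L' := max L 0
  set K := 8 * C₁ ^ 2 * L' + 2 * C₁ + 2 * C₁ * L' * M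
  have hM : 0 ≤ M := integral_nonneg fun x => abs_nonneg _
  refine ⟨q * K + 1, by positivity, ε₀, hε₀, fun η hη hd => ?_⟩
  set d := L2dist Ω η η₀
  have hd0 : 0 ≤ d := Real.sqrt_nonneg _
  have hθ : euclNorm (thetaStar η - thetaStar η₀) ≤ L' * d :=
    (hLip η hη hd).trans (by gcongr; exact le_max_left _ _)
  have hCS : ∫ x in Ω, |η x - η₀ x| ≤ d := integral_abs_le_sqrt_integral_sq (hη.sub hη₀)
  have hentry (j k : Fin q) : |(hessV Ω ys dys d2ys η (thetaStar η)
      - hessV Ω ys dys d2ys η₀ (thetaStar η₀)) j k| ≤ K * d := by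
    rw [Matrix.sub_apply, hessV_apply, hessV_apply]
    calc _ ≤ 8 * C₁ ^ 2 * euclNorm (thetaStar η - thetaStar η₀)
          + 2 * C₁ * (∫ x in Ω, |η x - η₀ x|)
          + 2 * C₁ * euclNorm (thetaStar η - thetaStar η₀) * M :=
          abs_integral_sub_le_of_abs_sub_le (g₁ := fun x => η x - η₀ x) (hInt η hη j k)
            (hInt η₀ hη₀ j k)
            ((hη.sub hη₀).integrable one_le_two) (hη₀.integrable one_le_two)
            ((ae_restrict_mem hΩm).mono fun x hx =>
              abs_hessIntegrand_sub_hessIntegrand_le hC₁ hys_bdd hdys_bdd hd2ys_bdd hys_lip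
                hdys_lip hd2ys_lip hx (hθΘ η) (hθΘ η₀) η η₀ j k)
      _ ≤ 8 * C₁ ^ 2 * (L' * d) + 2 * C₁ * d + 2 * C₁ * (L' * d) * M := by gcongr
      _ = K * d := by ring
  calc _ ≤ q * (K * d) := frobNorm_le_of_forall_abs_le (by positivity) hentry
    _ ≤ (q * K + 1) * d := by nlinarith

/-- Lipschitz continuity of the map `η ↦ V_η` (Hessian of the `L²`-discrepancy at the projected
calibration parameter `θ*_η`) in the Frobenius norm: there is `C > 0` such that
`‖V_η - V_{η₀}‖_F ≤ C ‖η - η₀‖_{L²(Ω)}` for all `η` in an `L²`-neighborhood of `η₀`. -/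
theorem hessV_lipschitz {p q : ℕ} (Ω : Set (Fin p → ℝ))
    (hΩc : IsCompact Ω) (hΩm : MeasurableSet Ω) (hvol : volume Ω = 1)
    (Θ : Set (Fin q → ℝ)) (hΘ : IsCompact Θ)
    (ys : (Fin p → ℝ) → (Fin q → ℝ) → ℝ)
    (dys : (Fin p → ℝ) → (Fin q → ℝ) → Fin q → ℝ)
    (d2ys : (Fin p → ℝ) → (Fin q → ℝ) → Fin q → Fin q → ℝ)
    -- measurability of the slices
    (hys_meas : ∀ θ ∈ Θ, AEStronglyMeasurable (fun x => ys x θ) (volume.restrict Ω))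
    (hdys_meas : ∀ θ ∈ Θ, AEStronglyMeasurable (fun x => dys x θ) (volume.restrict Ω))
    (hd2ys_meas : ∀ θ ∈ Θ, ∀ j k, AEStronglyMeasurable (fun x => d2ys x θ j k)
      (volume.restrict Ω))
    -- uniform boundedness and Lipschitz continuity (in θ) of yˢ and its first and second
    -- partial derivatives in θ, on Ω × Θ
    (C₁ : ℝ)
    (hys_bdd : ∀ x ∈ Ω, ∀ θ ∈ Θ, |ys x θ| ≤ C₁)
    (hdys_bdd : ∀ x ∈ Ω, ∀ θ ∈ Θ, euclNorm (dys x θ) ≤ C₁)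
    (hd2ys_bdd : ∀ x ∈ Ω, ∀ θ ∈ Θ, ∀ j k, |d2ys x θ j k| ≤ C₁)
    (hys_lip : ∀ x ∈ Ω, ∀ θ ∈ Θ, ∀ θ' ∈ Θ, |ys x θ - ys x θ'| ≤ C₁ * euclNorm (θ - θ'))
    (hdys_lip : ∀ x ∈ Ω, ∀ θ ∈ Θ, ∀ θ' ∈ Θ,
      euclNorm (dys x θ - dys x θ') ≤ C₁ * euclNorm (θ - θ'))
    (hd2ys_lip : ∀ x ∈ Ω, ∀ θ ∈ Θ, ∀ θ' ∈ Θ, ∀ j k,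
      |d2ys x θ j k - d2ys x θ' j k| ≤ C₁ * euclNorm (θ - θ'))
    -- the projected calibration parameter: well defined, valued in Θ, and Lipschitz near η₀
    (thetaStar : ((Fin p → ℝ) → ℝ) → (Fin q → ℝ))
    (hθΘ : ∀ η, thetaStar η ∈ Θ)
    (η₀ : (Fin p → ℝ) → ℝ) (hη₀ : MemLp η₀ 2 (volume.restrict Ω))
    (L ε₀ : ℝ) (hε₀ : 0 < ε₀)
    (hLip : ∀ η, MemLp η 2 (volume.restrict Ω) → L2dist Ω η η₀ ≤ ε₀ →
      euclNorm (thetaStar η - thetaStar η₀) ≤ L * L2dist Ω η η₀) :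
    ∃ C > 0, ∃ δ > 0, ∀ η, MemLp η 2 (volume.restrict Ω) → L2dist Ω η η₀ ≤ δ →
      frobNorm (hessV Ω ys dys d2ys η (thetaStar η) - hessV Ω ys dys d2ys η₀ (thetaStar η₀))
        ≤ C * L2dist Ω η η₀ :=
  hessV_lipschitz_general Ω hΩm hvol Θ ys dys d2ys hys_meas hdys_meas hd2ys_meas C₁ hys_bdd hdys_bdd
    hd2ys_bdd hys_lip hdys_lip hd2ys_lip thetaStar hθΘ η₀ hη₀ L ε₀ hε₀ hLip
end
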